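/- Let K ⊂ ℝ^d be compact with positive Lebesgue measure, p_1,...,p_k probability densities on K bounded above and below away from 0 on K, and ν a probability measure supported on K with bounded density q. Then the function F(λ) = E_ν[log q(X) − ∑_{i=1}^k λ_i log p_i(X)] + log(∫_K ∏_{i=1}^k p_i(y)^{λ_i} dy) is convex in λ on the simplex Δ_k. -/

import Mathlib

/-!
On `K` every `pᵢ` is positive, so
`∏ pᵢ ^ (a • λ + b • λ')ᵢ = (∏ pᵢ ^ λᵢ) ^ a * (∏ pᵢ ^ λ'ᵢ) ^ b`, and Hölder's inequality with
exponents `1 / a`, `1 / b` gives `Z (a • λ + b • λ') ≤ Z λ ^ a * Z λ' ^ b` for the partition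
function `Z λ = ∫_K ∏ pᵢ ^ λᵢ`; thus `log Z` is convex. The first term of the objective is the
`ν`-integral of a function affine in `λ`, hence affine in `λ`.
-/

open MeasureTheory Set

section

variable {ι α : Type*} [Fintype ι] [MeasurableSpace α] {μ : Measure α}

theorem convexOn_log_of_le_rpow_mul_rpow {E : Type*} [AddCommGroup E] [Module ℝ E] {s : Set E}
    (hs : Convex ℝ s) {F : E → ℝ} (hF_pos : ∀ x ∈ s, 0 < F x)
    (hF : ∀ x ∈ s, ∀ y ∈ s, ∀ a b : ℝ, 0 < a → 0 < b → a + b = 1 →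
      F (a • x + b • y) ≤ F x ^ a * F y ^ b) :
    ConvexOn ℝ s fun x => Real.log (F x) := by
  refine convexOn_iff_forall_pos.mpr ⟨hs, fun x hx y hy a b ha hb hab => ?_⟩
  have hxy := hs hx hy ha.le hb.le hab
  simp only [smul_eq_mul]
  rw [← Real.log_rpow (hF_pos x hx), ← Real.log_rpow (hF_pos y hy),
    ← Real.log_mul (Real.rpow_pos_of_pos (hF_pos x hx) a).ne'
      (Real.rpow_pos_of_pos (hF_pos y hy) b).ne']
  exact Real.log_le_log (hF_pos _ hxy) (hF x hx y hy a b ha hb hab)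

theorem prod_rpow_smul_add_smul {p : ι → ℝ} (hp : ∀ i, 0 < p i) (x y : ι → ℝ) (a b : ℝ) :
    ∏ i, p i ^ (a • x + b • y) i = (∏ i, p i ^ x i) ^ a * (∏ i, p i ^ y i) ^ b := by
  rw [← Real.finsetProd_rpow _ _ fun i _ => (Real.rpow_pos_of_pos (hp i) _).le,
    ← Real.finsetProd_rpow _ _ fun i _ => (Real.rpow_pos_of_pos (hp i) _).le,
    ← Finset.prod_mul_distrib]
  refine Finset.prod_congr rfl fun i _ => ?_
  rw [Pi.add_apply, Pi.smul_apply, Pi.smul_apply, smul_eq_mul, smul_eq_mul,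
    Real.rpow_add (hp i), mul_comm a, mul_comm b, Real.rpow_mul (hp i).le,
    Real.rpow_mul (hp i).le]

theorem integral_pos_of_ae_pos (hμ : μ ≠ 0) {f : α → ℝ} (hf_pos : ∀ᵐ x ∂μ, 0 < f x)
    (hf : Integrable f μ) : 0 < ∫ x, f x ∂μ := by
  rw [integral_pos_iff_support_of_nonneg_ae (hf_pos.mono fun _ hx => hx.le) hf]
  refine pos_iff_ne_zero.mpr fun h => hμ ?_
  rw [← ae_eq_bot, ← Filter.eventually_false_iff_eq_bot]
  filter_upwards [hf_pos, measure_eq_zero_iff_ae_notMem.mp h] with x hx hx'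
  exact hx' hx.ne'

theorem integral_rpow_mul_rpow_le {f g : α → ℝ}
    (hf_nonneg : 0 ≤ᵐ[μ] f) (hg_nonneg : 0 ≤ᵐ[μ] g) (hf : Integrable f μ) (hg : Integrable g μ)
    {a b : ℝ} (ha : 0 ≤ a) (hb : 0 ≤ b) (hab : a + b = 1) :
    ∫ x, f x ^ a * g x ^ b ∂μ ≤ (∫ x, f x ∂μ) ^ a * (∫ x, g x ∂μ) ^ b := by
  have hfg_nonneg : 0 ≤ᵐ[μ] fun x => f x ^ a * g x ^ b := by
    filter_upwards [hf_nonneg, hg_nonneg] with x hfx hgx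
    exact mul_nonneg (Real.rpow_nonneg hfx a) (Real.rpow_nonneg hgx b)
  have hfg_meas : AEStronglyMeasurable (fun x => f x ^ a * g x ^ b) μ :=
    ((hf.aemeasurable.pow_const a).mul (hg.aemeasurable.pow_const b)).aestronglyMeasurable
  have hofReal : (fun x => ENNReal.ofReal (f x ^ a * g x ^ b)) =ᵐ[μ]
      fun x => ENNReal.ofReal (f x) ^ a * ENNReal.ofReal (g x) ^ b := by
    filter_upwards [hf_nonneg, hg_nonneg] with x hfx hgx
    rw [ENNReal.ofReal_mul (Real.rpow_nonneg hfx a), ENNReal.ofReal_rpow_of_nonneg hfx ha,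
      ENNReal.ofReal_rpow_of_nonneg hgx hb]
  have hholder := ENNReal.lintegral_mul_norm_pow_le hf.aemeasurable.ennreal_ofReal
    hg.aemeasurable.ennreal_ofReal ha hb hab
  rw [integral_eq_lintegral_of_nonneg_ae hf_nonneg hf.1,
    integral_eq_lintegral_of_nonneg_ae hg_nonneg hg.1,
    integral_eq_lintegral_of_nonneg_ae hfg_nonneg hfg_meas,
    lintegral_congr_ae hofReal, ENNReal.toReal_rpow, ENNReal.toReal_rpow, ← ENNReal.toReal_mul]
  refine ENNReal.toReal_mono ?_ hholder
  exact ENNReal.mul_ne_top (ENNReal.rpow_ne_top_of_nonneg ha hf.lintegral_lt_top.ne)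
    (ENNReal.rpow_ne_top_of_nonneg hb hg.lintegral_lt_top.ne)

theorem integrable_prod_rpow_of_mem_stdSimplex {p : ι → α → ℝ}
    (hp_nonneg : ∀ᵐ x ∂μ, ∀ i, 0 ≤ p i x) (hp : ∀ i, Integrable (p i) μ) {lam : ι → ℝ} (hlam : lam ∈ stdSimplex ℝ ι) :
    Integrable (fun x => ∏ i, p i x ^ lam i) μ := by
  refine (integrable_finsetSum Finset.univ fun i _ => (hp i).const_mul (lam i)).mono'
    (Finset.aemeasurable_fun_prod _ fun i _ =>
      (hp i).aemeasurable.pow_const (lam i)).aestronglyMeasurable ?_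
  filter_upwards [hp_nonneg] with x hx
  rw [Real.norm_of_nonneg (Finset.prod_nonneg fun i _ => Real.rpow_nonneg (hx i) _)]
  exact Real.geom_mean_le_arith_mean_weighted _ _ _ (fun i _ => hlam.1 i) hlam.2 fun i _ => hx i

theorem convexOn_log_integral_prod_rpow (hμ : μ ≠ 0) {p : ι → α → ℝ}
    (hp : ∀ᵐ x ∂μ, ∀ i, 0 < p i x) {s : Set (ι → ℝ)} (hs : Convex ℝ s)
    (hint : ∀ lam ∈ s, Integrable (fun x => ∏ i, p i x ^ lam i) μ) :
    ConvexOn ℝ s fun lam => Real.log (∫ x, ∏ i, p i x ^ lam i ∂μ) := by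
  have hprod_pos : ∀ lam : ι → ℝ, ∀ᵐ x ∂μ, 0 < ∏ i, p i x ^ lam i := fun lam =>
    hp.mono fun x hx => Finset.prod_pos fun i _ => Real.rpow_pos_of_pos (hx i) _
  refine convexOn_log_of_le_rpow_mul_rpow hs
    (fun lam hlam => integral_pos_of_ae_pos hμ (hprod_pos lam) (hint lam hlam)) ?_
  intro x hx y hy a b ha hb hab
  calc ∫ z, ∏ i, p i z ^ (a • x + b • y) i ∂μ
      = ∫ z, (∏ i, p i z ^ x i) ^ a * (∏ i, p i z ^ y i) ^ b ∂μ :=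
        integral_congr_ae (hp.mono fun z hz => prod_rpow_smul_add_smul hz x y a b)
    _ ≤ _ := integral_rpow_mul_rpow_le ((hprod_pos x).mono fun _ h => h.le)
        ((hprod_pos y).mono fun _ h => h.le) (hint x hx) (hint y hy) ha.le hb.le hab

theorem convexOn_integral_sub_sum_mul (f : α → ℝ) {g : ι → α → ℝ}
    (hg : ∀ i, Integrable (g i) μ) :
    ConvexOn ℝ univ fun lam : ι → ℝ => ∫ x, (f x - ∑ i, lam i * g i x) ∂μ := by
  have hsum : ∀ lam : ι → ℝ, Integrable (fun x => ∑ i, lam i * g i x) μ := fun lam =>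
    integrable_finsetSum _ fun i _ => (hg i).const_mul (lam i)
  by_cases hf : Integrable f μ
  · have heq : (fun lam : ι → ℝ => ∫ x, (f x - ∑ i, lam i * g i x) ∂μ) =
        fun lam => (∫ x, f x ∂μ) - Fintype.linearCombination ℝ (fun i => ∫ x, g i x ∂μ) lam := by
      funext lam
      rw [integral_sub hf (hsum lam), Fintype.linearCombination_apply,
        integral_finsetSum _ fun i _ => (hg i).const_mul (lam i)]
      simp only [integral_const_mul, smul_eq_mul]
    rw [heq]
    exact (convexOn_const _ convex_univ).sub (LinearMap.concaveOn _ convex_univ)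
  · -- the integral takes its junk value `0` for every `lam`
    have hzero : ∀ lam : ι → ℝ, ∫ x, (f x - ∑ i, lam i * g i x) ∂μ = 0 := fun lam =>
      integral_undef fun h =>
        hf ((h.add (hsum lam)).congr (ae_of_all _ fun x => sub_add_cancel _ _))
    simpa only [hzero] using convexOn_const (0 : ℝ) convex_univ

end

theorem vanillaFusion_objective_convexOn_general
    {d k : ℕ} (K : Set (EuclideanSpace ℝ (Fin d))) (hK : IsCompact K)
    (hKpos : 0 < volume K)
    (p : Fin k → EuclideanSpace ℝ (Fin d) → ℝ)
    (c C : ℝ) (hc : 0 < c)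
    (hp_bounds : ∀ i, ∀ x ∈ K, c ≤ p i x ∧ p i x ≤ C)
    (hp_prob : ∀ i, ∫ x in K, p i x = 1)
    (ν : Measure (EuclideanSpace ℝ (Fin d))) [IsProbabilityMeasure ν]
    (q : EuclideanSpace ℝ (Fin d) → ℝ)
    (hq_density : ν = volume.withDensity (fun x => ENNReal.ofReal (q x)))
    (hq_supp : ∀ x ∉ K, q x = 0) :
    ConvexOn ℝ (stdSimplex ℝ (Fin k))
      (fun lam =>
        (∫ x, (Real.log (q x) - ∑ i, lam i * Real.log (p i x)) ∂ν) +
          Real.log (∫ y in K, ∏ i, p i y ^ lam i)) := by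
  have hKm : MeasurableSet K := hK.measurableSet
  have hν_ac : ν ≪ volume.restrict K := by
    have hq_ind :
        (fun x => ENNReal.ofReal (q x)) = K.indicator fun x => ENNReal.ofReal (q x) := by
      funext x
      by_cases hx : x ∈ K <;> simp [hx, hq_supp]
    rw [hq_density, hq_ind, withDensity_indicator hKm]
    exact withDensity_absolutelyContinuous _ _
  have hp_mem : ∀ᵐ x ∂volume.restrict K, ∀ i, c ≤ p i x ∧ p i x ≤ C :=
    ae_restrict_of_forall_mem hKm fun x hx i => hp_bounds i x hx
  have hp_int : ∀ i, Integrable (p i) (volume.restrict K) := fun i =>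
    Integrable.of_integral_ne_zero (by rw [hp_prob i]; exact one_ne_zero)
  have hlog_int : ∀ i, Integrable (fun x => Real.log (p i x)) ν := fun i =>
    Integrable.of_mem_Icc (Real.log c) (Real.log C) ((hp_int i).aemeasurable.log.mono_ac hν_ac)
      (hν_ac.ae_le (hp_mem.mono fun x hx => ⟨Real.log_le_log hc (hx i).1,
        Real.log_le_log (hc.trans_le (hx i).1) (hx i).2⟩))
  refine ((convexOn_integral_sub_sum_mul _ hlog_int).subset (subset_univ _)
    (convex_stdSimplex ℝ _)).add ?_
  exact convexOn_log_integral_prod_rpow (Measure.restrict_eq_zero.not.mpr hKpos.ne')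
    (hp_mem.mono fun x hx i => hc.trans_le (hx i).1) (convex_stdSimplex ℝ _)
    fun lam hlam => integrable_prod_rpow_of_mem_stdSimplex
      (hp_mem.mono fun x hx i => hc.le.trans (hx i).1) hp_int hlam

/-- Convexity of the vanilla-fusion objective
`F(λ) = E_ν[log q(X) − ∑ᵢ λᵢ log pᵢ(X)] + log ∫_K ∏ᵢ pᵢ^{λᵢ}`
on the probability simplex (Proposition 4.2). -/
theorem vanillaFusion_objective_convexOn
    {d k : ℕ} (K : Set (EuclideanSpace ℝ (Fin d))) (hK : IsCompact K)
    (hKpos : 0 < volume K)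
    (p : Fin k → EuclideanSpace ℝ (Fin d) → ℝ)
    (c C : ℝ) (hc : 0 < c)
    (hp_bounds : ∀ i, ∀ x ∈ K, c ≤ p i x ∧ p i x ≤ C)
    (hp_supp : ∀ i, ∀ x ∉ K, p i x = 0)
    (hp_prob : ∀ i, ∫ x in K, p i x = 1)
    (ν : Measure (EuclideanSpace ℝ (Fin d))) [IsProbabilityMeasure ν]
    (q : EuclideanSpace ℝ (Fin d) → ℝ) (Cq : ℝ)
    (hq_density : ν = volume.withDensity (fun x => ENNReal.ofReal (q x)))
    (hq_bound : ∀ x, q x ≤ Cq)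
    (hq_supp : ∀ x ∉ K, q x = 0) :
    ConvexOn ℝ (stdSimplex ℝ (Fin k))
      (fun lam =>
        (∫ x, (Real.log (q x) - ∑ i, lam i * Real.log (p i x)) ∂ν) +
          Real.log (∫ y in K, ∏ i, p i y ^ lam i)) :=
  vanillaFusion_objective_convexOn_general K hK hKpos p c C hc hp_bounds hp_prob ν q hq_density
    hq_supp
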